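/- arXiv:1109.4346 — 3 statements merged into one kernel-verified Lean document; each statement's English description precedes it below -/
import Mathlib

section
/- There is no 5-dimensional linear subspace of the vector space 𝔽₂¹⁶ in which every nonzero vector has Hamming weight exactly 8. -/
/-- Hamming weight of a vector in 𝔽₂¹⁶. -/
def hammingWeight (v : Fin 16 → ZMod 2) : ℕ :=
  (Finset.univ.filter fun i => v i ≠ 0).card

lemma col_card (C : Submodule (ZMod 2) (Fin 16 → ZMod 2))
    (S : Finset (Fin 16 → ZMod 2)) (hS : ∀ v, v ∈ S ↔ v ∈ C) (i : Fin 16) :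
    (S.filter fun v => v i ≠ 0).card = 0 ∨
    2 * (S.filter fun v => v i ≠ 0).card = S.card := by
  by_cases h : ∃ w ∈ S, w i ≠ 0
  · right
    obtain ⟨w, hwS, hwi⟩ := h
    have hww : ∀ v : Fin 16 → ZMod 2, v + w + w = v := by
      intro v; funext j
      have : ∀ a b : ZMod 2, a + b + b = a := by decide
      simp [this]
    have hcard : (S.filter fun v => v i ≠ 0).card
        = (S.filter fun v => ¬ v i ≠ 0).card := by
      apply Finset.card_bij' (fun v _ => v + w) (fun v _ => v + w)
      · intro v hv
        simp only [Finset.mem_filter] at hv ⊢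
        constructor
        · exact (hS _).2 (C.add_mem ((hS _).1 hv.1) ((hS _).1 hwS))
        · have : ∀ a b : ZMod 2, a ≠ 0 → b ≠ 0 → ¬ a + b ≠ 0 := by decide
          exact this _ _ hv.2 hwi
      · intro v hv
        simp only [Finset.mem_filter] at hv ⊢
        constructor
        · exact (hS _).2 (C.add_mem ((hS _).1 hv.1) ((hS _).1 hwS))
        · have : ∀ a b : ZMod 2, ¬ a ≠ 0 → b ≠ 0 → a + b ≠ 0 := by decide
          exact this _ _ hv.2 hwi
      · intro v _; exact hww v
      · intro v _; exact hww v
    have h2 := Finset.card_filter_add_card_filter_not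
      (s := S) (p := fun v => v i ≠ 0)
    generalize hA : (S.filter fun v => v i ≠ 0).card = A at hcard h2 ⊢
    generalize hB : (S.filter fun v => ¬ v i ≠ 0).card = B at hcard h2
    clear * - hcard h2
    omega
  · left
    push_neg at h
    simp only [Finset.card_eq_zero, Finset.filter_eq_empty_iff]
    intro v hv
    simpa using h v hv

/-- There is no 5-dimensional linear subspace of 𝔽₂¹⁶ in which every
nonzero vector has Hamming weight exactly 8. -/
theorem no_five_dim_subspace_all_weight_eight :
    ¬ ∃ C : Submodule (ZMod 2) (Fin 16 → ZMod 2),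
      Module.finrank (ZMod 2) C = 5 ∧
      ∀ v ∈ C, v ≠ 0 → hammingWeight v = 8 := by
  rintro ⟨C, hrank, hwt⟩
  classical
  set S : Finset (Fin 16 → ZMod 2) := Set.toFinset (C : Set _) with hSdef
  have hS : ∀ v, v ∈ S ↔ v ∈ C := by intro v; simp [hSdef]
  have hScard : S.card = 32 := by
    rw [hSdef, Set.toFinset_card]
    have : Fintype.card (C : Set (Fin 16 → ZMod 2)) = Fintype.card C := rfl
    rw [this, Module.card_eq_pow_finrank (K := ZMod 2) (V := C), ZMod.card, hrank]
    norm_num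
  -- total weight
  have h0 : (0 : Fin 16 → ZMod 2) ∈ S := (hS _).2 C.zero_mem
  have hsum : ∑ v ∈ S, hammingWeight v = 248 := by
    rw [← Finset.add_sum_erase _ _ h0]
    have h0w : hammingWeight 0 = 0 := by simp [hammingWeight]
    have hconst : ∀ v ∈ S.erase 0, hammingWeight v = 8 := by
      intro v hv
      exact hwt v ((hS _).1 (Finset.mem_of_mem_erase hv)) (Finset.ne_of_mem_erase hv)
    rw [h0w, Finset.sum_congr rfl hconst, Finset.sum_const,
      Finset.card_erase_of_mem h0, hScard]
    norm_num
  -- double counting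
  have hdc : ∑ v ∈ S, hammingWeight v
      = ∑ i : Fin 16, (S.filter fun v => v i ≠ 0).card := by
    simp only [hammingWeight, Finset.card_filter]
    exact Finset.sum_comm
  have hdvd : (16 : ℕ) ∣ ∑ i : Fin 16, (S.filter fun v => v i ≠ 0).card := by
    apply Finset.dvd_sum
    intro i _
    rcases col_card C S hS i with h | h
    · rw [h]; exact dvd_zero 16
    · rw [hScard] at h
      generalize hA : (S.filter fun v => v i ≠ 0).card = A at h ⊢
      clear * - h
      omega
  rw [hsum] at hdc
  rw [← hdc] at hdvd
  norm_num at hdvd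
end

section
/- Let M be a symmetric 22×22 integer matrix of determinant ±1 (unimodular). Then M cannot contain a principal 12×12 submatrix all of whose entries are even. -/
set_option maxRecDepth 10000 in
/-- A symmetric unimodular 22×22 integer matrix contains no principal
12×12 submatrix all of whose entries are even. -/
theorem no_even_principal_block (M : Matrix (Fin 22) (Fin 22) ℤ)
    (hsymm : M.IsSymm) (hdet : M.det = 1 ∨ M.det = -1) :
    ¬ ∃ s : Fin 12 → Fin 22, Function.Injective s ∧
      ∀ i j : Fin 12, Even (M (s i) (s j)) := by
  rintro ⟨s, hs, heven⟩
  classical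
  -- reduce mod 2
  set A : Matrix (Fin 22) (Fin 22) (ZMod 2) :=
    (Int.castRingHom (ZMod 2)).mapMatrix M with hA
  have hAdet : A.det = 1 := by
    rw [hA, ← RingHom.map_det]
    rcases hdet with h | h <;> rw [h] <;> decide
  have hUnit : IsUnit A := by
    apply Matrix.isUnit_iff_isUnit_det A |>.mpr
    rw [hAdet]; exact isUnit_one
  -- rows of A are linearly independent
  have hrows : LinearIndependent (ZMod 2) (fun i ↦ A i) :=
    Matrix.linearIndependent_rows_iff_isUnit.mpr hUnit
  have hv : LinearIndependent (ZMod 2) (fun j : Fin 12 ↦ A (s j)) :=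
    hrows.comp s hs
  -- the selected rows vanish on the coordinates in the range of s
  have hzero : ∀ (j i : Fin 12), A (s j) (s i) = 0 := by
    intro j i
    have h2 : (2 : ℤ) ∣ M (s j) (s i) := (heven j i).two_dvd
    have h0 : ((M (s j) (s i) : ℤ) : ZMod 2) = 0 :=
      (ZMod.intCast_zmod_eq_zero_iff_dvd _ 2).mpr h2
    rw [hA, RingHom.mapMatrix_apply, Matrix.map_apply]
    exact h0
  -- project to coordinates outside the range of s
  let π : (Fin 22 → ZMod 2) →ₗ[ZMod 2] ({i : Fin 22 // i ∉ Set.range s} → ZMod 2) :=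
    { toFun := fun x i ↦ x i.val
      map_add' := fun x y ↦ rfl
      map_smul' := fun c x ↦ rfl }
  have hdisj : Disjoint (Submodule.span (ZMod 2)
      (Set.range (fun j : Fin 12 ↦ A (s j)))) (LinearMap.ker π) := by
    have hspan : ∀ x ∈ Submodule.span (ZMod 2)
        (Set.range (fun j : Fin 12 ↦ A (s j))), ∀ i : Fin 12, x (s i) = 0 := by
      intro x hx i
      induction hx using Submodule.span_induction with
      | mem y hy => obtain ⟨j, rfl⟩ := hy; exact hzero j i
      | zero => rfl
      | add y z _ _ hy hz => simp [Pi.add_apply, hy, hz]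
      | smul c y _ hy => simp [Pi.smul_apply, hy]
    rw [Submodule.disjoint_def]
    intro x hx hker
    have hx' : ∀ i : Fin 12, x (s i) = 0 := hspan x hx
    have hk : ∀ i : Fin 22, i ∉ Set.range s → x i = 0 := by
      intro i hi
      exact congrFun (LinearMap.mem_ker.mp hker) ⟨i, hi⟩
    funext i
    by_cases h : i ∈ Set.range s
    · obtain ⟨j, rfl⟩ := h; exact hx' j
    · exact hk i h
  have hπv : LinearIndependent (ZMod 2)
      (π ∘ fun j : Fin 12 ↦ A (s j)) := hv.map hdisj
  have hle := hπv.fintype_card_le_finrank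
  rw [Module.finrank_fintype_fun_eq_card] at hle
  have hcard : Fintype.card {i : Fin 22 // i ∉ Set.range s} = 10 := by
    have h1 : Fintype.card {i : Fin 22 // i ∈ Set.range s} = 12 := by
      have h := Set.card_range_of_injective hs
      rw [Fintype.card_fin] at h
      exact (Fintype.card_congr (Equiv.refl _)).trans h
    have h2 := Fintype.card_subtype_compl (fun i : Fin 22 ↦ i ∈ Set.range s)
    rw [h2, h1, Fintype.card_fin]
  rw [hcard] at hle
  simp [Fintype.card_fin] at hle
end

section
/- The points (x:y:z:w) with x = y = 0 and z² + w² + 2czw = 0 are singular points of the Kummer quartic Q: 16kxyzw − φ² = 0; that is, at such points both the quartic form and all four of its partial derivatives vanish. -/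
open MvPolynomial

/-- The Kummer quartic `16k·xyzw − φ²` as a polynomial in four variables. -/
noncomputable def kummerPoly {K : Type*} [Field K] (a b c : K) :
    MvPolynomial (Fin 4) K :=
  C (16*(a^2 + b^2 + c^2 - 1 - 2*a*b*c)) * X 0 * X 1 * X 2 * X 3 -
    (X 0^2 + X 1^2 + X 2^2 + X 3^2 + C (2*a) * (X 1 * X 2 + X 0 * X 3)
      + C (2*b) * (X 0 * X 2 + X 1 * X 3) + C (2*c) * (X 0 * X 1 + X 2 * X 3))^2

/-- The points with `x = y = 0` and `z² + w² + 2czw = 0` are singular points of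
the Kummer quartic: the quartic and all four partial derivatives vanish there. -/
theorem kummer_singular_points {K : Type*} [Field K] [CharZero K]
    (a b c z w : K) (h : z^2 + w^2 + 2*c*z*w = 0) :
    eval ![0, 0, z, w] (kummerPoly a b c) = 0 ∧
    ∀ i : Fin 4, eval ![0, 0, z, w] (pderiv i (kummerPoly a b c)) = 0 := by
  constructor
  · simp [kummerPoly]
    linear_combination h
  · intro i
    fin_cases i <;>
      simp [kummerPoly, pderiv_X, pderiv_mul, pderiv_pow, Pi.single_apply] <;>
      exact Or.inl (by linear_combination h)
end
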